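/- arXiv:1304.4135 — 6 statements merged into one kernel-verified Lean document; each statement's English description precedes it below -/
import Mathlib

section
/- Let f : cl(B) → ℂ be continuously differentiable on the closed unit ball of ℝ³. Then for every unit vector ω ∈ S² and every r ∈ [0,1], r² |f(rω)|² ≤ |f(ω)|² + ∫_0^1 |ω^j ∂_j f(sω)|² s² ds, where ω^j ∂_j f denotes the radial directional derivative. -/
/-!
Along the ray `g s = f (s • ω)`, the function `φ s = s² ‖g s‖²` has
`φ' = 2s‖g‖² + 2s²⟪g, g'⟫ ≥ -s²‖g'‖²` for `0 ≤ s ≤ 1`, so integrating `φ'` from `r` to `1`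
gives `φ r ≤ φ 1 + ∫_r^1 s²‖g'‖² ≤ ‖g 1‖² + ∫_0^1 s²‖g'‖²`.
-/

open Metric Set MeasureTheory intervalIntegral RealInnerProductSpace

section WeightedBound

variable {E : Type*} [NormedAddCommGroup E] [InnerProductSpace ℝ E]

/-- With `a = ‖u‖`, `b = ‖v‖` this is Cauchy–Schwarz and
`2a² - 2sab + sb² = a² + (a - sb)² + s(1 - s)b²`. -/
lemma neg_norm_sq_mul_sq_le (u v : E) {s : ℝ} (hs₀ : 0 ≤ s) (hs₁ : s ≤ 1) :
    -(‖v‖ ^ 2 * s ^ 2) ≤ 2 * s * ‖u‖ ^ 2 + s ^ 2 * (2 * ⟪u, v⟫) := by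
  have hcs : -(‖u‖ * ‖v‖) ≤ ⟪u, v⟫ := (abs_le.1 (abs_real_inner_le_norm u v)).1
  have hsq : 0 ≤ ‖u‖ ^ 2 + (‖u‖ - s * ‖v‖) ^ 2 + s * (1 - s) * ‖v‖ ^ 2 := by
    have : 0 ≤ s * (1 - s) := mul_nonneg hs₀ (by linarith)
    positivity
  nlinarith [mul_nonneg hs₀ hsq,
    mul_nonneg (pow_two_nonneg s) (show 0 ≤ ⟪u, v⟫ + ‖u‖ * ‖v‖ by linarith)]

lemma sq_mul_norm_sq_le_of_hasDerivAt {g g' : ℝ → E} (hg : ContinuousOn g (Icc 0 1))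
    (hg' : ∀ s ∈ Ioo (0 : ℝ) 1, HasDerivAt g (g' s) s)
    (hint : IntegrableOn (fun s => ‖g' s‖ ^ 2 * s ^ 2) (Icc 0 1))
    {r : ℝ} (hr : r ∈ Icc (0 : ℝ) 1) :
    r ^ 2 * ‖g r‖ ^ 2 ≤ ‖g 1‖ ^ 2 + ∫ s in (0 : ℝ)..1, ‖g' s‖ ^ 2 * s ^ 2 := by
  obtain ⟨hr₀, hr₁⟩ := hr
  have hsub : Icc r 1 ⊆ Icc 0 1 := Icc_subset_Icc_left hr₀
  have hftc : ∫ s in r..1, -(‖g' s‖ ^ 2 * s ^ 2) ≤ 1 ^ 2 * ‖g 1‖ ^ 2 - r ^ 2 * ‖g r‖ ^ 2 := by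
    refine integral_le_sub_of_hasDeriv_right_of_le hr₁
      (((continuous_pow 2).continuousOn.mul (hg.norm.pow 2)).mono hsub)
      (fun s hs => (((hasDerivAt_pow 2 s).mul (hg' s ⟨hr₀.trans_lt hs.1, hs.2⟩).norm_sq)
        ).hasDerivWithinAt) (hint.mono_set hsub).neg (fun s hs => ?_)
    simpa using neg_norm_sq_mul_sq_le (g s) (g' s) (hr₀.trans hs.1.le) hs.2.le
  have hmono : ∫ s in r..1, ‖g' s‖ ^ 2 * s ^ 2 ≤ ∫ s in (0 : ℝ)..1, ‖g' s‖ ^ 2 * s ^ 2 :=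
    integral_mono_interval hr₀ hr₁ le_rfl (Filter.Eventually.of_forall fun s => by positivity)
      ((intervalIntegrable_iff_integrableOn_Icc_of_le zero_le_one).2 hint)
  rw [intervalIntegral.integral_neg, one_pow, one_mul] at hftc
  linarith

end WeightedBound

section Ray

variable {E F : Type*} [NormedAddCommGroup E] [NormedSpace ℝ E] [NormedAddCommGroup F]
  [NormedSpace ℝ F] {f : E → F} {ω : E}

lemma mapsTo_smul_Ioo_ball (hω : ‖ω‖ = 1) :
    MapsTo (fun s : ℝ => s • ω) (Ioo (-1) 1) (ball (0 : E) 1) := fun s hs => by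
  simpa [norm_smul, hω, abs_lt] using hs

lemma mapsTo_smul_Icc_closedBall (hω : ‖ω‖ = 1) :
    MapsTo (fun s : ℝ => s • ω) (Icc (-1) 1) (closedBall (0 : E) 1) := fun s hs => by
  simpa [norm_smul, hω, abs_le] using hs

lemma DifferentiableAt.hasDerivAt_comp_smul_const {s : ℝ} (hf : DifferentiableAt ℝ f (s • ω)) :
    HasDerivAt (fun t : ℝ => f (t • ω)) (fderiv ℝ f (s • ω) ω) s := by
  simpa only [one_smul, Function.comp_def] using
    hf.hasFDerivAt.comp_hasDerivAt s ((hasDerivAt_id' s).smul_const ω)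

lemma ContDiffOn.integrableOn_norm_fderiv_smul_sq_mul_sq (hf : ContDiffOn ℝ 1 f (closedBall 0 1))
    (hω : ‖ω‖ = 1) :
    IntegrableOn (fun s : ℝ => ‖fderiv ℝ f (s • ω) ω‖ ^ 2 * s ^ 2) (Icc 0 1) := by
  have hmaps := (mapsTo_smul_Icc_closedBall hω).mono_left (Icc_subset_Icc_left neg_one_lt_zero.le)
  have hcont : ContinuousOn
      (fun s : ℝ => ‖fderivWithin ℝ f (closedBall 0 1) (s • ω) ω‖ ^ 2 * s ^ 2) (Icc 0 1) := by
    have hunique : UniqueDiffOn ℝ (closedBall (0 : E) 1) :=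
      uniqueDiffOn_convex (convex_closedBall _ _)
        ⟨0, ball_subset_interior_closedBall (mem_ball_self one_pos)⟩
    exact ((((hf.continuousOn_fderivWithin hunique le_rfl).comp
      (continuous_id.smul continuous_const).continuousOn hmaps).clm_apply
      continuousOn_const).norm.pow 2).mul (continuous_pow 2).continuousOn
  -- `fderivWithin` and `fderiv` agree inside the ball, and the endpoints are null.
  rw [integrableOn_Icc_iff_integrableOn_Ioo]
  refine (hcont.integrableOn_Icc.mono_set Ioo_subset_Icc_self).congr_fun (fun s hs => ?_)
    measurableSet_Ioo
  have hball := mapsTo_smul_Ioo_ball hω (Ioo_subset_Ioo_left neg_one_lt_zero.le hs)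
  simp only [fderivWithin_of_mem_nhds (closedBall_mem_nhds_of_mem hball)]

end Ray

/-- Radial fundamental theorem of calculus estimate: for `f` continuously
differentiable on the closed unit ball of `ℝ³`, every unit vector `ω`, and every
`r ∈ [0,1]`, `r²|f(rω)|² ≤ |f(ω)|² + ∫_0^1 |ω^j∂_jf(sω)|² s² ds`. -/
theorem stmt1 (f : EuclideanSpace ℝ (Fin 3) → ℂ)
    (hf : ContDiffOn ℝ 1 f (closedBall 0 1))
    (ω : EuclideanSpace ℝ (Fin 3)) (hω : ‖ω‖ = 1)
    (r : ℝ) (hr : r ∈ Set.Icc (0:ℝ) 1) :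
    r ^ 2 * ‖f (r • ω)‖ ^ 2 ≤
      ‖f ω‖ ^ 2 + ∫ s in (0:ℝ)..1, ‖fderiv ℝ f (s • ω) ω‖ ^ 2 * s ^ 2 := by
  have hcont : ContinuousOn (fun s : ℝ => f (s • ω)) (Icc 0 1) :=
    hf.continuousOn.comp (continuous_id.smul continuous_const).continuousOn
      ((mapsTo_smul_Icc_closedBall hω).mono_left (Icc_subset_Icc_left neg_one_lt_zero.le))
  have hderiv : ∀ s ∈ Ioo (0 : ℝ) 1,
      HasDerivAt (fun t : ℝ => f (t • ω)) (fderiv ℝ f (s • ω) ω) s := fun s hs => by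
    have hball := mapsTo_smul_Ioo_ball hω (Ioo_subset_Ioo_left neg_one_lt_zero.le hs)
    exact ((hf.differentiableOn one_ne_zero _ (ball_subset_closedBall hball)).differentiableAt
      (closedBall_mem_nhds_of_mem hball)).hasDerivAt_comp_smul_const
  simpa using sq_mul_norm_sq_le_of_hasDerivAt hcont hderiv
    (hf.integrableOn_norm_fderiv_smul_sq_mul_sq hω) hr
end

section
/- For every a ∈ ℝ, the function v_a(t,x) := √2/(t + a(t² − |x|²)) is twice continuously differentiable and satisfies the cubic focusing wave equation (−∂_t² + Δ_x)v_a + v_a³ = 0 on the open set {(t,x) ∈ ℝ × ℝ³ : t + a(t² − |x|²) ≠ 0}. -/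
noncomputable section

/-- Spacetime `ℝ × ℝ³`. -/
abbrev Spc : Type := ℝ × EuclideanSpace ℝ (Fin 3)

/-- Directional derivative in the direction `w`. -/
noncomputable def dirDeriv (w : Spc) (v : Spc → ℝ) (p : Spc) : ℝ := fderiv ℝ v p w

/-- Second time derivative. -/
noncomputable def dtt (v : Spc → ℝ) : Spc → ℝ :=
  dirDeriv (1, 0) (dirDeriv (1, 0) v)

/-- Spatial Laplacian. -/
noncomputable def lap (v : Spc → ℝ) (p : Spc) : ℝ :=
  ∑ j : Fin 3, dirDeriv (0, EuclideanSpace.single j 1)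
    (dirDeriv (0, EuclideanSpace.single j 1) v) p

/-! Write `□ = -∂_t² + Δ` and `f = t + a(t² - |x|²)`. The chain rule gives
`□(c / f) = -c □f / f² + 2c Q(∇f) / f³`, with `Q` the Minkowski quadratic form. For this
quadric `□f = -8a` and `Q(∇f) = -(1 + 4af)`, so the terms in `a` cancel and
`□(c / f) = -2c / f³`, which is `-(c / f)³` for `c = √2`. -/

open Topology

section ConstDiv

variable {𝕜 E : Type*} [NontriviallyNormedField 𝕜] [NormedAddCommGroup E] [NormedSpace 𝕜 E]

theorem HasFDerivAt.fun_inv {f : E → 𝕜} {f' : E →L[𝕜] 𝕜} {q : E} (hf : HasFDerivAt f f' q)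
    (hq : f q ≠ 0) : HasFDerivAt (fun x => (f x)⁻¹) (-(f q ^ 2)⁻¹ • f') q :=
  (hasDerivAt_inv hq).comp_hasFDerivAt q hf

theorem fderiv_const_div_apply {f : E → 𝕜} {q : E} (hf : DifferentiableAt 𝕜 f q)
    (hq : f q ≠ 0) (c : 𝕜) (w : E) :
    fderiv 𝕜 (fun x => c / f x) q w = -c * fderiv 𝕜 f q w / f q ^ 2 := by
  simp only [div_eq_mul_inv]
  rw [((hf.hasFDerivAt.fun_inv hq).const_mul c).fderiv]
  simp only [smul_apply, smul_eq_mul]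
  ring

theorem fderiv_fderiv_const_div_apply {f : E → 𝕜} {p : E} (hf : ContDiffAt 𝕜 2 f p)
    (hp : f p ≠ 0) (c : 𝕜) (w : E) :
    fderiv 𝕜 (fun q => fderiv 𝕜 (fun x => c / f x) q w) p w =
      -c * fderiv 𝕜 (fun q => fderiv 𝕜 f q w) p w / f p ^ 2
        + 2 * c * fderiv 𝕜 f p w ^ 2 / f p ^ 3 := by
  have hfirst : (fun q => fderiv 𝕜 (fun x => c / f x) q w) =ᶠ[𝓝 p]
      fun q => -c * fderiv 𝕜 f q w * (f q ^ 2)⁻¹ := by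
    filter_upwards [hf.eventually (by simp), hf.continuousAt.eventually_ne hp] with q hq hq0
    rw [fderiv_const_div_apply (hq.differentiableAt (by simp)) hq0 c w, div_eq_mul_inv]
  have hf₁ := (hf.differentiableAt (by simp)).hasFDerivAt
  have hf₂ : DifferentiableAt 𝕜 (fun q => fderiv 𝕜 f q w) p :=
    ((hf.fderiv_right (m := 1) le_rfl).differentiableAt one_ne_zero).clm_apply
      (differentiableAt_const w)
  rw [hfirst.fderiv_eq,
    ((hf₂.hasFDerivAt.const_mul (-c)).fun_mul ((hf₁.pow 2).fun_inv (pow_ne_zero 2 hp))).fderiv]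
  simp only [add_apply, smul_apply, smul_eq_mul, nsmul_eq_mul]
  field_simp
  ring

end ConstDiv

section KelvinDenom

variable {E : Type*} [NormedAddCommGroup E] [InnerProductSpace ℝ E]

def kelvinDenom (a : ℝ) (q : ℝ × E) : ℝ := q.1 + a * (q.1 ^ 2 - ‖q.2‖ ^ 2)

theorem contDiff_kelvinDenom (a : ℝ) {n : WithTop ℕ∞} : ContDiff ℝ n (kelvinDenom (E := E) a) :=
  contDiff_fst.add (contDiff_const.mul ((contDiff_fst.pow 2).sub
    ((contDiff_norm_sq ℝ).comp contDiff_snd)))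

theorem fderiv_kelvinDenom_apply (a : ℝ) (p w : ℝ × E) :
    fderiv ℝ (kelvinDenom a) p w = (1 + 2 * a * p.1) * w.1 - 2 * a * inner ℝ p.2 w.2 := by
  have h : HasFDerivAt (kelvinDenom a) _ p := hasFDerivAt_fst.fun_add
    (((hasFDerivAt_fst.pow 2).fun_sub hasFDerivAt_snd.norm_sq).const_mul a)
  rw [h.fderiv]
  simp only [add_apply, sub_apply, smul_apply, smul_eq_mul, nsmul_eq_mul,
    ContinuousLinearMap.coe_fst', ContinuousLinearMap.comp_apply, ContinuousLinearMap.coe_snd',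
    coe_innerSL_apply]
  ring

theorem fderiv_fderiv_kelvinDenom_apply (a : ℝ) (p w : ℝ × E) :
    fderiv ℝ (fun q => fderiv ℝ (kelvinDenom a) q w) p w = 2 * a * (w.1 ^ 2 - ‖w.2‖ ^ 2) := by
  simp_rw [fderiv_kelvinDenom_apply]
  have h := ((((hasFDerivAt_fst (p := p)).const_mul (2 * a)).const_add 1).mul_const w.1).fun_sub
    ((hasFDerivAt_snd.inner ℝ (hasFDerivAt_const w.2 p)).const_mul (2 * a))
  rw [h.fderiv]
  simp only [sub_apply, smul_apply, smul_eq_mul, ContinuousLinearMap.coe_fst',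
    ContinuousLinearMap.comp_apply, ContinuousLinearMap.prod_apply, ContinuousLinearMap.coe_snd',
    zero_apply, fderivInnerCLM_apply, inner_zero_right, zero_add, real_inner_self_eq_norm_sq]
  ring

end KelvinDenom

theorem wave_const_div {f : Spc → ℝ} {p : Spc} (hf : ContDiffAt ℝ 2 f p) (hp : f p ≠ 0)
    (c : ℝ) :
    -dtt (fun q => c / f q) p + lap (fun q => c / f q) p =
      -c * (-dtt f p + lap f p) / f p ^ 2 +
        2 * c * (-dirDeriv (1, 0) f p ^ 2
          + ∑ j : Fin 3, dirDeriv (0, EuclideanSpace.single j 1) f p ^ 2) / f p ^ 3 := by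
  unfold dtt lap dirDeriv
  simp only [fderiv_fderiv_const_div_apply hf hp, Finset.sum_add_distrib, ← Finset.sum_div,
    ← Finset.mul_sum]
  ring

theorem wave_kelvinDenom (a : ℝ) (p : Spc) :
    -dtt (kelvinDenom a) p + lap (kelvinDenom a) p = -8 * a := by
  unfold dtt lap dirDeriv
  simp only [fderiv_fderiv_kelvinDenom_apply, norm_zero, PiLp.norm_single, norm_one,
    Finset.sum_const, Finset.card_univ, Fintype.card_fin, nsmul_eq_mul]
  ring

theorem minkowski_normSq_fderiv_kelvinDenom (a : ℝ) (p : Spc) :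
    -dirDeriv (1, 0) (kelvinDenom a) p ^ 2
      + ∑ j : Fin 3, dirDeriv (0, EuclideanSpace.single j 1) (kelvinDenom a) p ^ 2
      = -(1 + 4 * a * kelvinDenom a p) := by
  simp only [dirDeriv, fderiv_kelvinDenom_apply, EuclideanSpace.inner_single_right,
    inner_zero_right, Real.ringHom_apply, kelvinDenom, EuclideanSpace.real_norm_sq_eq]
  simp only [mul_zero, mul_one, one_mul, zero_sub, sub_zero, neg_sq, mul_pow, ← Finset.mul_sum]
  ring

/-- For every `a ∈ ℝ`, `v_a(t,x) = √2/(t + a(t² - |x|²))` is a `C²` solution of the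
cubic focusing wave equation `(-∂_t² + Δ)v + v³ = 0` on the open set where the
denominator does not vanish. -/
theorem stmt6 (a : ℝ) (v : Spc → ℝ)
    (hv : v = fun p : Spc => Real.sqrt 2 / (p.1 + a * (p.1 ^ 2 - ‖p.2‖ ^ 2))) :
    ContDiffOn ℝ 2 v {p : Spc | p.1 + a * (p.1 ^ 2 - ‖p.2‖ ^ 2) ≠ 0} ∧
      ∀ p ∈ {p : Spc | p.1 + a * (p.1 ^ 2 - ‖p.2‖ ^ 2) ≠ 0},
        -dtt v p + lap v p + (v p) ^ 3 = 0 := by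
  replace hv : v = fun p => √2 / kelvinDenom a p := hv
  subst hv
  refine ⟨contDiffOn_const.div (contDiff_kelvinDenom a).contDiffOn fun p hp => hp,
    fun p (hp : kelvinDenom a p ≠ 0) => ?_⟩
  rw [wave_const_div (contDiff_kelvinDenom a).contDiffAt hp, wave_kelvinDenom,
    minkowski_normSq_fderiv_kelvinDenom]
  have hc : √2 ^ 2 = 2 := Real.sq_sqrt zero_le_two
  field_simp
  linear_combination √2 * hc
end
end

section
/- Let f ∈ L²(B) and ε > 0. Then there exists a function u : cl(B) \ {0} → ℂ that is twice continuously differentiable, such that u and ∇u are bounded on cl(B) \ {0}, the second derivatives satisfy the bound |∂_j∂_k u(ξ)| ≤ C/|ξ| for some constant C and all ξ ∈ cl(B) \ {0} and all j,k (so in particular u ∈ H²(B)), and such that the function g defined by g(ξ) := −(δ^{jk} − ξ^j ξ^k) ∂_j ∂_k u(ξ) + 5 ξ^j ∂_j u(ξ) + (15/4) u(ξ) satisfies ‖f − g‖_{L²(B)} < ε. In other words, the range of the degenerate elliptic operator u ↦ −(δ^{jk} − ξ^j ξ^k)∂_j∂_k u + 5ξ^j∂_j u + (15/4)u on such functions is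 dense in L²(B). -/
open MeasureTheory Metric

noncomputable section

/-- The punctured closed unit ball `cl(B) \ {0}` in `ℝ³`. -/
abbrev PB : Set (EuclideanSpace ℝ (Fin 3)) := closedBall 0 1 \ {0}

/-- First partial derivative `∂_k` (within `cl(B) \ {0}`). -/
noncomputable def pd1 (u : EuclideanSpace ℝ (Fin 3) → ℂ)
    (ξ : EuclideanSpace ℝ (Fin 3)) (k : Fin 3) : ℂ :=
  fderivWithin ℝ u PB ξ (EuclideanSpace.single k 1)

/-- Second partial derivative `∂_j∂_k` (within `cl(B) \ {0}`). -/
noncomputable def pd2 (u : EuclideanSpace ℝ (Fin 3) → ℂ)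
    (ξ : EuclideanSpace ℝ (Fin 3)) (j k : Fin 3) : ℂ :=
  fderivWithin ℝ (fun y => pd1 u y k) PB ξ (EuclideanSpace.single j 1)

/-!
Euler's identity gives `ξ^j ∂_j φ = n φ` and `ξ^j ξ^k ∂_j ∂_k φ = n (n - 1) φ` for a
homogeneous polynomial `φ` of degree `n`, so the operator sends `φ` to `λₙ φ - Δφ` with
`λₙ = n (n - 1) + 5 n + 15/4 = (n + 3/2) (n + 5/2) ≠ 0`, while `Δφ` is homogeneous of degree
`n - 2`. By induction on the degree every polynomial lies in the range of the operator on
polynomials. Polynomials are dense in `L²(B)` by Stone–Weierstrass, and a polynomial `u` is smooth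
up to the boundary, so it satisfies all the required bounds.
-/

open MvPolynomial

namespace MvPolynomial

variable {σ R : Type*} [Fintype σ] [CommRing R]

def laplacian : MvPolynomial σ R →ₗ[R] MvPolynomial σ R :=
  ∑ i, (pderiv i).toLinearMap ∘ₗ (pderiv i).toLinearMap

theorem laplacian_apply (p : MvPolynomial σ R) : laplacian p = ∑ i, pderiv i (pderiv i p) := by
  simp [laplacian]

theorem IsHomogeneous.sum_X_mul_X_mul_pderiv_pderiv {φ : MvPolynomial σ R} {n : ℕ}
    (h : φ.IsHomogeneous n) :
    ∑ j, ∑ k, X j * X k * pderiv j (pderiv k φ) = (n * (n - 1)) • φ := by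
  calc ∑ j, ∑ k, X j * X k * pderiv j (pderiv k φ)
      = ∑ k, X k * ∑ j, X j * pderiv j (pderiv k φ) := by
        rw [Finset.sum_comm]
        simp_rw [Finset.mul_sum]
        exact Finset.sum_congr rfl fun k _ => Finset.sum_congr rfl fun j _ => by ring
    _ = ∑ k, X k * (n - 1) • pderiv k φ := by
        simp_rw [h.pderiv.sum_X_mul_pderiv]
    _ = (n * (n - 1)) • φ := by
        simp_rw [mul_smul_comm, ← Finset.smul_sum, h.sum_X_mul_pderiv, smul_smul, mul_comm]

variable [DecidableEq σ]

def ellipticOp (a b : R) : MvPolynomial σ R →ₗ[R] MvPolynomial σ R :=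
  -(∑ j, ∑ k, LinearMap.mulLeft R (C (if j = k then 1 else 0) - X j * X k) ∘ₗ
      (pderiv j).toLinearMap ∘ₗ (pderiv k).toLinearMap) +
    a • ∑ j, LinearMap.mulLeft R (X j) ∘ₗ (pderiv j).toLinearMap + b • LinearMap.id

theorem ellipticOp_apply (a b : R) (p : MvPolynomial σ R) :
    ellipticOp a b p = -(∑ j, ∑ k, (C (if j = k then 1 else 0) - X j * X k) *
      pderiv j (pderiv k p)) + a • ∑ j, X j * pderiv j p + b • p := by
  simp [ellipticOp]

theorem IsHomogeneous.ellipticOp_eq {φ : MvPolynomial σ R} {n : ℕ} (h : φ.IsHomogeneous n)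
    (a b : R) :
    ellipticOp a b φ = ((n * (n - 1) : ℕ) + a * n + b) • φ - laplacian φ := by
  have hsplit : ∀ j k, (C (if j = k then 1 else 0) - X j * X k) * pderiv j (pderiv k φ) =
      (if j = k then pderiv j (pderiv k φ) else 0) - X j * X k * pderiv j (pderiv k φ) := by
    intro j k; split_ifs <;> simp [sub_mul]
  simp_rw [ellipticOp_apply, laplacian_apply, hsplit, Finset.sum_sub_distrib, Finset.sum_ite_eq,
    Finset.mem_univ, if_true, h.sum_X_mul_X_mul_pderiv_pderiv, h.sum_X_mul_pderiv]
  module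

theorem IsHomogeneous.mem_range_ellipticOp {K : Type*} [Field K] {a b : K}
    (h : ∀ n : ℕ, ((n * (n - 1) : ℕ) : K) + a * n + b ≠ 0) {n : ℕ} {φ : MvPolynomial σ K}
    (hφ : φ.IsHomogeneous n) : φ ∈ LinearMap.range (ellipticOp a b) := by
  induction n using Nat.strong_induction_on generalizing φ with
  | _ n ih =>
    set c : K := ((n * (n - 1) : ℕ) : K) + a * n + b
    have hinv : ellipticOp a b (c⁻¹ • φ) = φ - c⁻¹ • laplacian φ := by
      rw [map_smul, hφ.ellipticOp_eq, smul_sub, smul_smul, inv_mul_cancel₀ (h n), one_smul]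
    have hΔ : laplacian φ ∈ LinearMap.range (ellipticOp a b) := by
      rcases Nat.eq_zero_or_pos n with rfl | hn
      · rw [totalDegree_eq_zero_iff_eq_C.mp ((totalDegree_zero_iff_isHomogeneous σ).mpr hφ)]
        simp [laplacian_apply]
      · refine ih (n - 1 - 1) (by omega) ?_
        rw [laplacian_apply]
        exact IsHomogeneous.sum _ _ _ fun i _ => hφ.pderiv.pderiv
    rw [show φ = ellipticOp a b (c⁻¹ • φ) + c⁻¹ • laplacian φ by rw [hinv]; abel]
    exact add_mem (LinearMap.mem_range_self _ _) (Submodule.smul_mem _ _ hΔ)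

theorem ellipticOp_surjective {K : Type*} [Field K] {a b : K}
    (h : ∀ n : ℕ, ((n * (n - 1) : ℕ) : K) + a * n + b ≠ 0) :
    Function.Surjective (ellipticOp (σ := σ) a b) := by
  intro p
  rw [← sum_homogeneousComponent p]
  exact Submodule.sum_mem _ fun i _ =>
    (homogeneousComponent_isHomogeneous i p).mem_range_ellipticOp h

end MvPolynomial

theorem MvPolynomial.hasFDerivAt_eval_continuousLinearMap {σ 𝕜 E A : Type*} [Fintype σ]
    [NontriviallyNormedField 𝕜] [NormedAddCommGroup E] [NormedSpace 𝕜 E] [NormedCommRing A]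
    [NormedAlgebra 𝕜 A] (ℓ : σ → E →L[𝕜] A) (P : MvPolynomial σ A) (x : E) :
    HasFDerivAt (fun y => eval (fun i => ℓ i y) P)
      (∑ i, eval (fun i => ℓ i x) (pderiv i P) • ℓ i) x := by
  classical
  induction P using MvPolynomial.induction_on with
  | C r =>
    simp only [eval_C]
    exact (hasFDerivAt_const r x).congr_fderiv (by ext v; simp)
  | add p q hp hq =>
    simp only [eval_add]
    exact (hp.add hq).congr_fderiv (by ext v; simp [add_mul, Finset.sum_add_distrib])
  | mul_X p n hp =>
    simp only [eval_mul, eval_X]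
    refine (hp.mul (ℓ n).hasFDerivAt).congr_fderiv ?_
    ext v
    simp [Pi.single_apply, apply_ite (eval _), add_mul, ite_mul, Finset.sum_add_distrib,
      Finset.mul_sum, mul_assoc]

def polyFun {ι : Type*} (P : MvPolynomial ι ℂ) (ξ : EuclideanSpace ℝ ι) : ℂ :=
  eval (fun i => (ξ i : ℂ)) P

theorem contDiff_polyFun {ι : Type*} [Fintype ι] (P : MvPolynomial ι ℂ) {n : WithTop ℕ∞} :
    ContDiff ℝ n (polyFun P) := by
  have h : AnalyticOnNhd ℝ (polyFun P) Set.univ := AnalyticOnNhd.eval_continuousLinearMap'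
    (fun i => Complex.ofRealCLM.comp (EuclideanSpace.proj (𝕜 := ℝ) (ι := ι) i)) P
  exact h.contDiff

theorem continuous_polyFun {ι : Type*} [Fintype ι] (P : MvPolynomial ι ℂ) :
    Continuous (polyFun P) :=
  (contDiff_polyFun P (n := 0)).continuous

theorem hasFDerivAt_polyFun {ι : Type*} [Fintype ι] (P : MvPolynomial ι ℂ)
    (ξ : EuclideanSpace ℝ ι) :
    HasFDerivAt (polyFun P)
      (∑ i, polyFun (pderiv i P) ξ • Complex.ofRealCLM.comp (EuclideanSpace.proj i)) ξ :=
  MvPolynomial.hasFDerivAt_eval_continuousLinearMap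
    (fun i => Complex.ofRealCLM.comp (EuclideanSpace.proj (𝕜 := ℝ) (ι := ι) i)) P ξ

theorem exists_polyFun_near_of_isCompact {ι : Type*} [Fintype ι] {K : Set (EuclideanSpace ℝ ι)}
    (hK : IsCompact K) {g : EuclideanSpace ℝ ι → ℂ} (hg : ContinuousOn g K) {δ : ℝ} (hδ : 0 < δ) :
    ∃ P : MvPolynomial ι ℂ, ∀ ξ ∈ K, ‖g ξ - polyFun P ξ‖ < δ := by
  have := isCompact_iff_compactSpace.mp hK
  let coord : ι → C(K, ℂ) := fun i => ⟨fun ξ => ((ξ : EuclideanSpace ℝ ι) i : ℂ), by fun_prop⟩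
  let A := StarAlgebra.adjoin ℂ (Set.range coord)
  -- the coordinates are real, hence self-adjoint, so `A` consists of polynomials in them
  have hA : A.toSubalgebra = (aeval coord).range := by
    have hself : ∀ i, star (coord i) = coord i := fun i => by ext; simp [coord]
    have : star (Set.range coord) = Set.range coord := by
      ext f
      simp only [Set.mem_star, Set.mem_range]
      exact ⟨fun ⟨i, hi⟩ => ⟨i, by rw [← hself, hi, star_star]⟩,
        fun ⟨i, hi⟩ => ⟨i, by rw [← hi, hself]⟩⟩
    rw [StarAlgebra.adjoin_toSubalgebra, this, Set.union_self, Algebra.adjoin_range_eq_range_aeval]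
  have hsep : A.SeparatesPoints := by
    intro x y hxy
    obtain ⟨i, hi⟩ : ∃ i, (x : EuclideanSpace ℝ ι) i ≠ (y : EuclideanSpace ℝ ι) i := by
      by_contra! h
      exact hxy (Subtype.ext (PiLp.ext h))
    exact ⟨coord i, ⟨coord i, StarAlgebra.subset_adjoin ℂ _ ⟨i, rfl⟩, rfl⟩,
      by simpa [coord] using hi⟩
  have hdense := ContinuousMap.starSubalgebra_topologicalClosure_eq_top_of_separatesPoints A hsep
  let g' : C(K, ℂ) := ⟨K.domRestrict g, hg.domRestrict⟩
  have hg' : g' ∈ A.topologicalClosure := hdense ▸ StarSubalgebra.mem_top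
  obtain ⟨a, haA, hga⟩ := Metric.mem_closure_iff.mp hg' δ hδ
  have haA' : a ∈ A.toSubalgebra := haA
  rw [hA] at haA'
  obtain ⟨P, rfl⟩ := haA'
  refine ⟨P, fun ξ hξ => ?_⟩
  have hP : aeval coord P ⟨ξ, hξ⟩ = polyFun P ξ := by
    rw [← ContinuousMap.evalAlgHom_apply (S := ℂ), comp_aeval_apply]; rfl
  rw [← dist_eq_norm, ← hP]
  exact (ContinuousMap.dist_apply_le_dist ⟨ξ, hξ⟩).trans_lt hga

open scoped ENNReal in
theorem MeasureTheory.MemLp.exists_polyFun_eLpNorm_sub_le {ι : Type*} [Fintype ι]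
    {s : Set (EuclideanSpace ℝ ι)} (hs : Bornology.IsBounded s) {p : ℝ≥0∞} (hp₁ : 1 ≤ p)
    (hp : p ≠ ∞) {f : EuclideanSpace ℝ ι → ℂ} (hf : MemLp f p (volume.restrict s)) {ε : ℝ≥0∞}
    (hε : ε ≠ 0) :
    ∃ P : MvPolynomial ι ℂ, eLpNorm (fun ξ => f ξ - polyFun P ξ) p (volume.restrict s) ≤ ε := by
  have := Measure.WeaklyRegular.restrict_of_measure_ne_top (μ := volume) hs.measure_lt_top.ne
  obtain ⟨g, hfg, -⟩ := hf.exists_boundedContinuous_eLpNorm_sub_le hp (ENNReal.half_pos hε).ne'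
  have hM : volume.restrict s Set.univ ^ p.toReal⁻¹ ≠ ∞ := by
    rw [Measure.restrict_apply_univ]
    exact ENNReal.rpow_ne_top_of_nonneg (by positivity) hs.measure_lt_top.ne
  obtain ⟨δ, hδ, hδM⟩ := ENNReal.exists_nnreal_pos_mul_lt hM (ENNReal.half_pos hε).ne'
  obtain ⟨P, hP⟩ := exists_polyFun_near_of_isCompact hs.isCompact_closure
    g.continuous.continuousOn (NNReal.coe_pos.mpr hδ)
  refine ⟨P, ?_⟩
  have hgP : eLpNorm (fun ξ => g ξ - polyFun P ξ) p (volume.restrict s) ≤ ε / 2 := by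
    refine (eLpNorm_le_of_ae_bound (C := δ) ?_).trans ?_
    · filter_upwards [ae_restrict_of_ae_restrict_of_subset subset_closure
        (ae_restrict_mem isClosed_closure.measurableSet)] with ξ hξ using (hP ξ hξ).le
    · rw [ENNReal.ofReal_coe_nnreal, mul_comm]
      exact hδM.le
  calc eLpNorm (fun ξ => f ξ - polyFun P ξ) p (volume.restrict s)
      = eLpNorm ((f - ⇑g) + fun ξ => g ξ - polyFun P ξ) p (volume.restrict s) := by
        congr 1; ext ξ; simp
    _ ≤ ε / 2 + ε / 2 := (eLpNorm_add_le (hf.1.sub g.continuous.aestronglyMeasurable)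
        (g.continuous.aestronglyMeasurable.sub
        (continuous_polyFun P).aestronglyMeasurable) hp₁).trans (add_le_add hfg hgP)
    _ = ε := ENNReal.add_halves ε

theorem uniqueDiffOn_PB : UniqueDiffOn ℝ PB :=
  (uniqueDiffOn_convex (convex_closedBall 0 1)
    (by rw [interior_closedBall _ one_ne_zero]; exact ⟨0, mem_ball_self one_pos⟩)).inter
    isOpen_compl_singleton

theorem pd1_polyFun (P : MvPolynomial (Fin 3) ℂ) {ξ : EuclideanSpace ℝ (Fin 3)} (hξ : ξ ∈ PB)
    (k : Fin 3) : pd1 (polyFun P) ξ k = polyFun (pderiv k P) ξ := by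
  rw [pd1, (hasFDerivAt_polyFun P ξ).hasFDerivWithinAt.fderivWithin (uniqueDiffOn_PB ξ hξ)]
  simp [apply_ite ((↑) : ℝ → ℂ), mul_ite]

theorem pd2_polyFun (P : MvPolynomial (Fin 3) ℂ) {ξ : EuclideanSpace ℝ (Fin 3)} (hξ : ξ ∈ PB)
    (j k : Fin 3) : pd2 (polyFun P) ξ j k = polyFun (pderiv j (pderiv k P)) ξ := by
  rw [pd2, fderivWithin_congr (fun y hy => pd1_polyFun P hy k) (pd1_polyFun P hξ k), ← pd1,
    pd1_polyFun _ hξ]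

theorem exists_bound_pd1_polyFun (U : MvPolynomial (Fin 3) ℂ) :
    ∃ M : ℝ, ∀ ξ ∈ PB, ‖polyFun U ξ‖ ≤ M ∧ ∀ k : Fin 3, ‖pd1 (polyFun U) ξ k‖ ≤ M := by
  obtain ⟨M, hM⟩ :=
    (isCompact_closedBall (0 : EuclideanSpace ℝ (Fin 3)) 1).exists_bound_of_continuousOn
    ((continuous_polyFun U).prodMk
      (continuous_pi fun k => continuous_polyFun (pderiv k U))).continuousOn
  refine ⟨M, fun ξ hξ => ⟨(norm_fst_le _).trans (hM ξ hξ.1), fun k => ?_⟩⟩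
  rw [pd1_polyFun U hξ]
  exact ((norm_le_pi_norm _ k).trans (norm_snd_le _)).trans (hM ξ hξ.1)

theorem exists_bound_pd2_polyFun (U : MvPolynomial (Fin 3) ℂ) :
    ∃ C : ℝ, ∀ ξ ∈ PB, ∀ j k : Fin 3, ‖pd2 (polyFun U) ξ j k‖ ≤ C / ‖ξ‖ := by
  obtain ⟨C, hC⟩ :=
    (isCompact_closedBall (0 : EuclideanSpace ℝ (Fin 3)) 1).exists_bound_of_continuousOn
    (continuous_pi fun j => continuous_pi fun k =>
      continuous_polyFun (pderiv j (pderiv k U))).continuousOn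
  refine ⟨C, fun ξ hξ j k => ?_⟩
  have hbound := hC ξ hξ.1
  rw [pd2_polyFun U hξ]
  refine ((norm_le_pi_norm (fun k => polyFun (pderiv j (pderiv k U)) ξ) k).trans
    (norm_le_pi_norm (fun j k => polyFun (pderiv j (pderiv k U)) ξ) j)).trans (hbound.trans ?_)
  exact le_div_self ((norm_nonneg _).trans hbound) (norm_pos_iff.mpr hξ.2)
    (mem_closedBall_zero_iff.mp hξ.1)

def ellipticOpFn (u : EuclideanSpace ℝ (Fin 3) → ℂ) (ξ : EuclideanSpace ℝ (Fin 3)) : ℂ :=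
  -(∑ j : Fin 3, ∑ k : Fin 3,
      (((if j = k then (1:ℝ) else 0) - ξ j * ξ k : ℝ) : ℂ) * pd2 u ξ j k) +
    5 * (∑ j : Fin 3, (ξ j : ℂ) * pd1 u ξ j) + (15/4) * u ξ

theorem ellipticOpFn_polyFun (U : MvPolynomial (Fin 3) ℂ) {ξ : EuclideanSpace ℝ (Fin 3)}
    (hξ : ξ ∈ PB) : ellipticOpFn (polyFun U) ξ = polyFun (ellipticOp 5 (15/4) U) ξ := by
  simp only [ellipticOpFn, pd1_polyFun U hξ, pd2_polyFun U hξ, ellipticOp_apply, polyFun,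
    map_add, map_neg, map_sum, map_mul, map_sub, smul_eval, eval_C, eval_X]
  push_cast [apply_ite]
  ring

theorem ellipticOp_eigenvalue_ne_zero (n : ℕ) : ((n * (n - 1) : ℕ) : ℂ) + 5 * n + 15 / 4 ≠ 0 := by
  have h : (0 : ℝ) < (n * (n - 1) : ℕ) + 5 * n + 15 / 4 := by positivity
  have := Complex.ofReal_ne_zero.mpr h.ne'
  push_cast at this ⊢
  exact this

theorem ae_mem_PB : ∀ᵐ ξ ∂(volume.restrict (ball (0 : EuclideanSpace ℝ (Fin 3)) 1)), ξ ∈ PB := by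
  filter_upwards [ae_restrict_mem measurableSet_ball,
    ae_restrict_of_ae (compl_mem_ae_iff.mpr (measure_singleton 0))] with ξ h₁ h₂
  exact ⟨ball_subset_closedBall h₁, h₂⟩

/-- Density of the range of the degenerate elliptic operator
`u ↦ -(δ^{jk} - ξ^jξ^k)∂_j∂_ku + 5ξ^j∂_ju + (15/4)u` in `L²(B)`:
for every `f ∈ L²(B)` and `ε > 0` there is `u`, twice continuously differentiable on
`cl(B) \ {0}`, with `u`, `∇u` bounded and `|∂_j∂_ku(ξ)| ≤ C/|ξ|`, such that
`‖f - g‖_{L²(B)} < ε` where `g` is given by the displayed formula. -/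
theorem stmt8 (f : EuclideanSpace ℝ (Fin 3) → ℂ)
    (hf : MemLp f 2 (volume.restrict (ball (0 : EuclideanSpace ℝ (Fin 3)) 1)))
    (ε : ℝ) (hε : 0 < ε) :
    ∃ u : EuclideanSpace ℝ (Fin 3) → ℂ,
      ContDiffOn ℝ 2 u PB ∧
      (∃ M : ℝ, ∀ ξ ∈ PB, ‖u ξ‖ ≤ M ∧ ∀ k : Fin 3, ‖pd1 u ξ k‖ ≤ M) ∧
      (∃ C : ℝ, ∀ ξ ∈ PB, ∀ j k : Fin 3, ‖pd2 u ξ j k‖ ≤ C / ‖ξ‖) ∧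
      eLpNorm
        (fun ξ => f ξ -
          (-(∑ j : Fin 3, ∑ k : Fin 3,
                (((if j = k then (1:ℝ) else 0) - ξ j * ξ k : ℝ) : ℂ) * pd2 u ξ j k) +
            5 * (∑ j : Fin 3, (ξ j : ℂ) * pd1 u ξ j) + (15/4) * u ξ))
        2 (volume.restrict (ball (0 : EuclideanSpace ℝ (Fin 3)) 1)) <
        ENNReal.ofReal ε := by
  obtain ⟨P, hP⟩ := hf.exists_polyFun_eLpNorm_sub_le isBounded_ball one_le_two (by norm_num)
    (ENNReal.ofReal_pos.mpr (half_pos hε)).ne'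
  obtain ⟨U, hU⟩ := ellipticOp_surjective ellipticOp_eigenvalue_ne_zero P
  refine ⟨polyFun U, (contDiff_polyFun U).contDiffOn, exists_bound_pd1_polyFun U,
    exists_bound_pd2_polyFun U, ?_⟩
  change eLpNorm (fun ξ => f ξ - ellipticOpFn (polyFun U) ξ) _ _ < _
  have hfg : (fun ξ => f ξ - ellipticOpFn (polyFun U) ξ) =ᵐ[volume.restrict (ball 0 1)]
      fun ξ => f ξ - polyFun P ξ := by
    filter_upwards [ae_mem_PB] with ξ hξ
    rw [ellipticOpFn_polyFun U hξ, hU]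
  rw [eLpNorm_congr_ae hfg]
  exact hP.trans_lt ((ENNReal.ofReal_lt_ofReal_iff hε).mpr (half_lt_self hε))
end
end

section
/- Let ℓ ∈ ℕ₀ and define φ : (0,1) → ℝ by φ(z) := [ (1 − √(1−z))^{−ℓ−1/2} − (1 + √(1−z))^{−ℓ−1/2} ] / ( (2ℓ+1)√(1−z) ). Then φ is twice continuously differentiable on (0,1) and satisfies the hypergeometric differential equation z(1−z)φ''(z) + [c − (a+b+1)z]φ'(z) − a·b·φ(z) = 0 on (0,1), with parameters a = (3+2ℓ)/4, b = (5+2ℓ)/4, c = (3+2ℓ)/2. In particular |φ(z)| → ∞ as z → 0+. -/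
/-!
Put `s = √(1 - z)` and `α = -ℓ - 1/2`, so that `φ(z) = h(s) / s` with
`h(s) = ((1 - s)^α - (1 + s)^α) / (2ℓ + 1)`. Both `(1 - s)^α` and `(1 + s)^α` solve the
Gegenbauer-type equation `(1 - s²) h'' + 2(α - 1) s h' + α(1 - α) h = 0`, and the substitution
`z = 1 - s²`, `φ = h / s` turns it into the hypergeometric equation with `a = (1 - α)/2`,
`b = (2 - α)/2`, `c = 1 - α`. As `z → 0⁺` we have `s → 1⁻`, where `(1 - s)^α → ∞` because
`α < 0`.
-/

open Set Filter Topology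

noncomputable section

def powDiff (α s : ℝ) : ℝ := (1 - s) ^ α - (1 + s) ^ α

def powSum (α s : ℝ) : ℝ := (1 - s) ^ α + (1 + s) ^ α

end

lemma hasDerivAt_one_sub_rpow (β : ℝ) {s : ℝ} (hs : s < 1) :
    HasDerivAt (fun s => (1 - s) ^ β) (-(β * (1 - s) ^ (β - 1))) s := by
  simpa using ((hasDerivAt_id s).const_sub 1).rpow_const (p := β) (Or.inl (by simp; linarith))

lemma hasDerivAt_one_add_rpow (β : ℝ) {s : ℝ} (hs : -1 < s) :
    HasDerivAt (fun s => (1 + s) ^ β) (β * (1 + s) ^ (β - 1)) s := by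
  simpa using ((hasDerivAt_id s).const_add 1).rpow_const (p := β) (Or.inl (by simp; linarith))

lemma hasDerivAt_powDiff (β : ℝ) {s : ℝ} (hs : s ∈ Ioo (-1 : ℝ) 1) :
    HasDerivAt (powDiff β) (-β * powSum (β - 1) s) s := by
  refine ((hasDerivAt_one_sub_rpow β hs.2).sub (hasDerivAt_one_add_rpow β hs.1)).congr_deriv ?_
  rw [powSum]; ring

lemma hasDerivAt_powSum (β : ℝ) {s : ℝ} (hs : s ∈ Ioo (-1 : ℝ) 1) :
    HasDerivAt (powSum β) (-β * powDiff (β - 1) s) s := by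
  refine ((hasDerivAt_one_sub_rpow β hs.2).add (hasDerivAt_one_add_rpow β hs.1)).congr_deriv ?_
  rw [powDiff]; ring

lemma contDiffOn_powDiff (n : WithTop ℕ∞) (β : ℝ) :
    ContDiffOn ℝ n (powDiff β) (Ioo (-1) 1) := by
  intro s hs
  apply ContDiffAt.contDiffWithinAt
  exact ((contDiffAt_const.sub contDiffAt_id).rpow_const_of_ne (by simp; linarith [hs.2])).sub
    ((contDiffAt_const.add contDiffAt_id).rpow_const_of_ne (by simp; linarith [hs.1]))

lemma powDiff_gegenbauer_ode (α : ℝ) {s : ℝ} (hs : s ∈ Ioo (-1 : ℝ) 1) :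
    (1 - s ^ 2) * (α * (α - 1) * powDiff (α - 1 - 1) s)
      + 2 * (α - 1) * s * (-α * powSum (α - 1) s) + α * (1 - α) * powDiff α s = 0 := by
  have hm : (1 - s) ≠ 0 := by linarith [hs.2]
  have hp : (1 + s) ≠ 0 := by linarith [hs.1]
  simp only [powDiff, powSum, Real.rpow_sub_one hm, Real.rpow_sub_one hp]
  field_simp
  ring

lemma sqrt_one_sub_mem_Ioo {z : ℝ} (hz : z ∈ Ioo (0 : ℝ) 1) : √(1 - z) ∈ Ioo (0 : ℝ) 1 :=
  ⟨Real.sqrt_pos.mpr (by linarith [hz.2]), (Real.sqrt_lt' one_pos).mpr (by linarith [hz.1])⟩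

lemma HasDerivAt.comp_sqrt_one_sub {F : ℝ → ℝ} {F' z : ℝ} (hz : z < 1)
    (hF : HasDerivAt F F' √(1 - z)) :
    HasDerivAt (fun z => F √(1 - z)) (-F' / (2 * √(1 - z))) z := by
  refine (hF.comp z (((hasDerivAt_id' z).const_sub 1).sqrt (by simp; linarith))).congr_deriv ?_
  ring

theorem hypergeometric_ode_of_gegenbauer_ode {α : ℝ} {h h' h'' φ : ℝ → ℝ}
    (hh : ∀ s ∈ Ioo (0 : ℝ) 1, HasDerivAt h (h' s) s)
    (hh' : ∀ s ∈ Ioo (0 : ℝ) 1, HasDerivAt h' (h'' s) s)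
    (hode : ∀ s ∈ Ioo (0 : ℝ) 1,
      (1 - s ^ 2) * h'' s + 2 * (α - 1) * s * h' s + α * (1 - α) * h s = 0)
    (hφ : φ = fun z => h √(1 - z) / √(1 - z)) {z : ℝ} (hz : z ∈ Ioo (0 : ℝ) 1) :
    z * (1 - z) * deriv (deriv φ) z + (1 - α - ((1 - α) / 2 + (2 - α) / 2 + 1) * z) * deriv φ z
      - (1 - α) / 2 * ((2 - α) / 2) * φ z = 0 := by
  set K : ℝ → ℝ := fun s => (h s - s * h' s) / (2 * s ^ 3)
  have hφ' : ∀ z ∈ Ioo (0 : ℝ) 1, HasDerivAt φ (K √(1 - z)) z := by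
    intro z hz
    obtain ⟨hs0, -⟩ := sqrt_one_sub_mem_Ioo hz
    subst hφ
    refine (((hh _ (sqrt_one_sub_mem_Ioo hz)).div (hasDerivAt_id' _) hs0.ne').comp_sqrt_one_sub
      hz.2).congr_deriv ?_
    simp only [K]
    field_simp
    ring
  have hK : ∀ s ∈ Ioo (0 : ℝ) 1,
      HasDerivAt K (-(s ^ 2 * h'' s + 3 * h s - 3 * s * h' s) / (2 * s ^ 4)) s := by
    intro s hs
    refine (((hh s hs).sub ((hasDerivAt_id' s).mul (hh' s hs))).div
      ((hasDerivAt_pow 3 s).const_mul 2) (by positivity [hs.1])).congr_deriv ?_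
    have := hs.1.ne'
    simp only [Pi.sub_apply, Pi.mul_apply]
    field_simp
    ring
  obtain ⟨hs0, hs1⟩ := sqrt_one_sub_mem_Ioo hz
  set s := √(1 - z) with hs
  have hφ'' : deriv (deriv φ) z = (s ^ 2 * h'' s + 3 * h s - 3 * s * h' s) / (4 * s ^ 5) := by
    have hev : deriv φ =ᶠ[𝓝 z] fun z => K √(1 - z) :=
      eventually_of_mem (isOpen_Ioo.mem_nhds hz) fun t ht => (hφ' t ht).deriv
    rw [hev.deriv_eq, ((hK s ⟨hs0, hs1⟩).comp_sqrt_one_sub hz.2).deriv, ← hs]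
    field_simp
    ring
  have hz_eq : z = 1 - s ^ 2 := by rw [hs, Real.sq_sqrt (by linarith [hz.2])]; ring
  rw [hφ'', (hφ' z hz).deriv, hφ]
  simp only [K]
  rw [← hs, hz_eq]
  field_simp
  linear_combination 4 * s ^ 4 * hode s ⟨hs0, hs1⟩

lemma ContDiffOn.comp_sqrt_one_sub_div {n : WithTop ℕ∞} {h : ℝ → ℝ}
    (hh : ContDiffOn ℝ n h (Ioo 0 1)) :
    ContDiffOn ℝ n (fun z => h √(1 - z) / √(1 - z)) (Ioo 0 1) := by
  intro z hz
  have hs := sqrt_one_sub_mem_Ioo hz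
  have hsqrt : ContDiffAt ℝ n (fun z => √(1 - z)) z :=
    (contDiffAt_const.sub contDiffAt_id).sqrt (by simp; linarith [hz.2])
  exact (((hh.contDiffAt (isOpen_Ioo.mem_nhds hs)).comp z hsqrt).div hsqrt
    hs.1.ne').contDiffWithinAt

lemma tendsto_sqrt_one_sub_nhdsGT_zero :
    Tendsto (fun z : ℝ => √(1 - z)) (𝓝[>] 0) (𝓝[<] 1) := by
  refine tendsto_nhdsWithin_of_tendsto_nhds_of_eventually_within _ ?_ ?_
  · have : Continuous fun z : ℝ => √(1 - z) := by fun_prop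
    simpa using (this.tendsto 0).mono_left nhdsWithin_le_nhds
  · filter_upwards [self_mem_nhdsWithin] with z hz
    exact (Real.sqrt_lt' one_pos).mpr (by simp only [mem_Ioi] at hz; linarith)

lemma tendsto_powDiff_nhdsLT_one {α : ℝ} (hα : α < 0) :
    Tendsto (powDiff α) (𝓝[<] 1) atTop := by
  have h_one_sub : Tendsto (fun s : ℝ => 1 - s) (𝓝[<] 1) (𝓝[>] 0) := by
    refine tendsto_nhdsWithin_of_tendsto_nhds_of_eventually_within _ ?_ ?_
    · have : Continuous fun s : ℝ => 1 - s := by fun_prop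
      simpa using (this.tendsto 1).mono_left nhdsWithin_le_nhds
    · filter_upwards [self_mem_nhdsWithin] with s hs
      simpa using hs
  have h_one_add : Tendsto (fun s : ℝ => -(1 + s) ^ α) (𝓝[<] 1) (𝓝 (-(1 + 1) ^ α)) :=
    (((continuousAt_const.add continuousAt_id).rpow_const (Or.inl (by norm_num))).neg.tendsto
      |>.mono_left nhdsWithin_le_nhds)
  exact ((tendsto_rpow_neg_nhdsGT_zero hα).comp h_one_sub).atTop_add h_one_add

/-- The elementary closed-form function
`φ(z) = [(1-√(1-z))^{-ℓ-1/2} - (1+√(1-z))^{-ℓ-1/2}] / ((2ℓ+1)√(1-z))`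
is twice continuously differentiable on `(0,1)`, solves the hypergeometric
equation with `a = (3+2ℓ)/4`, `b = (5+2ℓ)/4`, `c = (3+2ℓ)/2`, and blows up as
`z → 0+`. -/
theorem stmt11 (ℓ : ℕ) (φ : ℝ → ℝ)
    (hφ : φ = fun z : ℝ =>
      ((1 - Real.sqrt (1 - z)) ^ (-(ℓ:ℝ) - 1/2)
        - (1 + Real.sqrt (1 - z)) ^ (-(ℓ:ℝ) - 1/2)) /
      ((2 * ℓ + 1) * Real.sqrt (1 - z))) :
    ContDiffOn ℝ 2 φ (Ioo 0 1) ∧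
    (∀ z ∈ Ioo (0:ℝ) 1,
      z * (1 - z) * deriv (deriv φ) z
        + ((3 + 2 * ℓ)/2 - ((3 + 2 * ℓ)/4 + (5 + 2 * ℓ)/4 + 1) * z) * deriv φ z
        - ((3 + 2 * ℓ)/4) * ((5 + 2 * ℓ)/4) * φ z = 0) ∧
    Tendsto (fun z => |φ z|) (nhdsWithin 0 (Ioi 0)) atTop := by
  set α : ℝ := -ℓ - 1 / 2 with hα
  set c : ℝ := 2 * ℓ + 1
  have hc : 0 < c := by positivity
  replace hφ : φ = fun z => powDiff α √(1 - z) / c / √(1 - z) := by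
    simp only [hφ, powDiff, div_div]
  have hsub : Ioo (0 : ℝ) 1 ⊆ Ioo (-1) 1 := Ioo_subset_Ioo_left (by norm_num)
  refine ⟨?_, fun z hz => ?_, ?_⟩
  · rw [hφ]
    exact (((contDiffOn_powDiff 2 α).div_const c).mono hsub).comp_sqrt_one_sub_div
  · have hode := hypergeometric_ode_of_gegenbauer_ode (α := α)
      (fun s hs => (hasDerivAt_powDiff α (hsub hs)).div_const c)
      (fun s hs => ((hasDerivAt_powSum (α - 1) (hsub hs)).const_mul (-α)).div_const c)
      (fun s hs => by linear_combination powDiff_gegenbauer_ode α (hsub hs) / c) hφ hz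
    linear_combination hode
  · have hα_neg : α < 0 := by rw [hα]; linarith [(Nat.cast_nonneg ℓ : (0 : ℝ) ≤ ℓ)]
    have hpow : Tendsto (fun s => powDiff α s / c / s) (𝓝[<] 1) atTop := by
      simpa only [div_eq_mul_inv, inv_one] using
        ((tendsto_powDiff_nhdsLT_one hα_neg).atTop_div_const hc).atTop_mul_pos
          (inv_pos.mpr one_pos) ((tendsto_inv₀ one_ne_zero).mono_left nhdsWithin_le_nhds)
    rw [hφ]
    exact tendsto_abs_atTop_atTop.comp (hpow.comp tendsto_sqrt_one_sub_nhdsGT_zero)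
end

section
/- Let ℓ ∈ ℕ₀, λ ∈ ℂ, and let v : (0,1) → ℂ be twice continuously differentiable. Define u : (0,1) → ℂ by u(ρ) := ρ^ℓ v(ρ²). Then u satisfies −(1−ρ²)u''(ρ) − (2/ρ)u'(ρ) + 2(λ+2)ρ u'(ρ) + [(λ+1)(λ+2) − 6] u(ρ) + (ℓ(ℓ+1)/ρ²) u(ρ) = 0 for all ρ ∈ (0,1) if and only if v satisfies the hypergeometric differential equation z(1−z)v''(z) + [c − (a+b+1)z] v'(z) − a·b·v(z) = 0 for all z ∈ (0,1), where a = (−1+ℓ+λ)/2, b = (4+ℓ+λ)/2, c = 3/2 + ℓ. -/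
open Set

/-!
Write `u = ρ^ℓ • w` with `w ρ = v (ρ²)`. Leibniz's rule expresses `u'` and `u''` through
`w, w', w''`, and the chain rule through `v, v', v''` at `z = ρ²`. Substituting into the spectral
operator, all negative powers of `ρ` cancel and what is left is exactly `-4 ρ^ℓ` times the
hypergeometric operator applied to `v` at `ρ²`. Since `ρ ↦ ρ²` maps `(0,1)` onto itself and
`ρ^ℓ ≠ 0` there, the two equations are equivalent.
-/

section Calculus

variable {𝕜 F : Type*} [NontriviallyNormedField 𝕜] [NormedAddCommGroup F] [NormedSpace 𝕜 F]
  {w : 𝕜 → F} {x : 𝕜}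

theorem iteratedDeriv_two_eq_deriv_deriv (f : 𝕜 → F) : iteratedDeriv 2 f = deriv (deriv f) := by
  rw [iteratedDeriv_succ, iteratedDeriv_one]

theorem iteratedDeriv_pow_smul (n ℓ : ℕ) (hw : ContDiffAt 𝕜 n w x) :
    iteratedDeriv n (fun y => y ^ ℓ • w y) x = ∑ i ∈ Finset.range (n + 1),
      n.choose i • (ℓ.descFactorial i * x ^ (ℓ - i)) • iteratedDeriv (n - i) w x := by
  rw [← iteratedDerivWithin_univ]
  exact (iteratedDerivWithin_smul (mem_univ x) uniqueDiffOn_univ (f := (· ^ ℓ))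
    (contDiffWithinAt_univ.2 (contDiffAt_id.pow ℓ)) hw.contDiffWithinAt).trans
    (by simp only [iteratedDerivWithin_univ, iteratedDeriv_pow])

theorem deriv_comp_sq (hw : DifferentiableAt 𝕜 w (x ^ 2)) :
    deriv (fun y => w (y ^ 2)) x = (2 * x) • deriv w (x ^ 2) :=
  (deriv.scomp (h := fun y => y ^ 2) x hw (differentiableAt_pow 2)).trans (by simp)

theorem deriv_deriv_comp_sq (hw : ContDiffAt 𝕜 2 w (x ^ 2)) :
    deriv (deriv fun y => w (y ^ 2)) x =
      (2 * x) ^ 2 • deriv (deriv w) (x ^ 2) + (2 : 𝕜) • deriv w (x ^ 2) := by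
  rw [← iteratedDeriv_two_eq_deriv_deriv, ← iteratedDeriv_two_eq_deriv_deriv]
  exact (iteratedDeriv_scomp_two (f := fun y => y ^ 2) hw (contDiffAt_id.pow 2)).trans (by simp)

end Calculus

theorem Nat.descFactorial_mul_pow_sub {K : Type*} [Field K] (ℓ k : ℕ) {x : K} (hx : x ≠ 0) :
    (ℓ.descFactorial k : K) * x ^ (ℓ - k) = ℓ.descFactorial k * x ^ ℓ / x ^ k := by
  rcases le_or_gt k ℓ with hk | hk
  · rw [pow_sub₀ x hx hk, mul_div_assoc, div_eq_mul_inv]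
  · simp [Nat.descFactorial_eq_zero_iff_lt.2 hk]

noncomputable def spectralOperator (ℓ : ℕ) (lam : ℂ) (u : ℝ → ℂ) (ρ : ℝ) : ℂ :=
  -(1 - (ρ : ℂ) ^ 2) * deriv (deriv u) ρ - (2 / (ρ : ℂ)) * deriv u ρ
    + 2 * (lam + 2) * (ρ : ℂ) * deriv u ρ
    + ((lam + 1) * (lam + 2) - 6) * u ρ
    + ((ℓ : ℂ) * ((ℓ : ℂ) + 1) / (ρ : ℂ) ^ 2) * u ρ

noncomputable def hypergeometricOperator (a b c : ℂ) (v : ℝ → ℂ) (z : ℝ) : ℂ :=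
  (z : ℂ) * (1 - (z : ℂ)) * deriv (deriv v) z + (c - (a + b + 1) * (z : ℂ)) * deriv v z
    - a * b * v z

theorem spectralOperator_pow_mul_comp_sq (ℓ : ℕ) (lam : ℂ) {v : ℝ → ℂ} {ρ : ℝ} (hρ : ρ ≠ 0)
    (hv : ContDiffAt ℝ 2 v (ρ ^ 2)) :
    spectralOperator ℓ lam (fun ρ : ℝ => (ρ : ℂ) ^ ℓ * v (ρ ^ 2)) ρ =
      -4 * (ρ : ℂ) ^ ℓ *
        hypergeometricOperator ((-1 + ℓ + lam) / 2) ((4 + ℓ + lam) / 2) (3 / 2 + ℓ) v (ρ ^ 2) := by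
  have hu : (fun ρ : ℝ => (ρ : ℂ) ^ ℓ * v (ρ ^ 2)) = fun ρ => ρ ^ ℓ • v (ρ ^ 2) := by
    ext; simp [Complex.real_smul]
  have hw : ContDiffAt ℝ 2 (fun y => v (y ^ 2)) ρ :=
    hv.comp (f := fun y => y ^ 2) ρ (contDiffAt_id.pow 2)
  have hρ' : (ρ : ℂ) ≠ 0 := Complex.ofReal_ne_zero.2 hρ
  rw [spectralOperator, hypergeometricOperator, hu, ← iteratedDeriv_two_eq_deriv_deriv,
    ← iteratedDeriv_one (f := fun ρ => _ • _), iteratedDeriv_pow_smul 1 ℓ (hw.of_le one_le_two),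
    iteratedDeriv_pow_smul 2 ℓ hw]
  simp only [Finset.sum_range_succ, Finset.sum_range_zero, zero_add, Nat.reduceSub,
    iteratedDeriv_zero, iteratedDeriv_one, iteratedDeriv_two_eq_deriv_deriv,
    deriv_comp_sq (hv.differentiableAt two_ne_zero), deriv_deriv_comp_sq hv,
    Nat.descFactorial_mul_pow_sub _ _ hρ, Nat.cast_descFactorial_two, Nat.descFactorial_one,
    Nat.descFactorial_zero, Nat.choose_zero_right, Nat.choose_self, Nat.choose_one_right,
    Complex.real_smul, nsmul_eq_mul, Complex.ofReal_div, Complex.ofReal_mul, Complex.ofReal_pow,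
    Complex.ofReal_natCast, Complex.ofReal_ofNat, Nat.cast_one, Nat.cast_ofNat]
  field_simp
  ring

/-- The substitution `u(ρ) = ρ^ℓ v(ρ²)` transforms the spectral ODE
`-(1-ρ²)u'' - (2/ρ)u' + 2(λ+2)ρu' + [(λ+1)(λ+2)-6]u + (ℓ(ℓ+1)/ρ²)u = 0` on `(0,1)`
into the hypergeometric equation `z(1-z)v'' + [c-(a+b+1)z]v' - ab·v = 0` with
`a = (-1+ℓ+λ)/2`, `b = (4+ℓ+λ)/2`, `c = 3/2+ℓ`, and conversely. -/
theorem stmt12 (ℓ : ℕ) (lam : ℂ) (v : ℝ → ℂ) (hv : ContDiffOn ℝ 2 v (Ioo 0 1))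
    (u : ℝ → ℂ) (hu : u = fun ρ : ℝ => (ρ:ℂ)^ℓ * v (ρ^2)) :
    (∀ ρ ∈ Ioo (0:ℝ) 1,
      -(1 - (ρ:ℂ)^2) * deriv (deriv u) ρ - (2 / (ρ:ℂ)) * deriv u ρ
        + 2 * (lam + 2) * (ρ:ℂ) * deriv u ρ
        + ((lam + 1) * (lam + 2) - 6) * u ρ
        + ((ℓ:ℂ) * ((ℓ:ℂ) + 1) / (ρ:ℂ)^2) * u ρ = 0) ↔
    (∀ z ∈ Ioo (0:ℝ) 1,
      (z:ℂ) * (1 - (z:ℂ)) * deriv (deriv v) z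
        + ((3/2 + (ℓ:ℂ)) - (((-1 + (ℓ:ℂ) + lam)/2) + ((4 + (ℓ:ℂ) + lam)/2) + 1) * (z:ℂ))
          * deriv v z
        - ((-1 + (ℓ:ℂ) + lam)/2) * ((4 + (ℓ:ℂ) + lam)/2) * v z = 0) := by
  subst hu
  change (∀ ρ ∈ Ioo (0:ℝ) 1, spectralOperator ℓ lam _ ρ = 0) ↔
    ∀ z ∈ Ioo (0:ℝ) 1, hypergeometricOperator _ _ _ v z = 0
  have hsq : ∀ ρ ∈ Ioo (0:ℝ) 1, ρ ^ 2 ∈ Ioo (0:ℝ) 1 := fun ρ hρ =>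
    ⟨pow_pos hρ.1 2, pow_lt_one₀ hρ.1.le hρ.2 two_ne_zero⟩
  have hred : ∀ ρ ∈ Ioo (0:ℝ) 1, spectralOperator ℓ lam _ ρ = _ := fun ρ hρ =>
    spectralOperator_pow_mul_comp_sq ℓ lam hρ.1.ne'
      (hv.contDiffAt (isOpen_Ioo.mem_nhds (hsq ρ hρ)))
  constructor
  · intro h z hz
    obtain ⟨ρ, hρ, rfl⟩ : ∃ ρ ∈ Ioo (0:ℝ) 1, ρ ^ 2 = z :=
      ⟨√z, ⟨Real.sqrt_pos.2 hz.1, (Real.sqrt_lt' one_pos).2 (by rw [one_pow]; exact hz.2)⟩,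
        Real.sq_sqrt hz.1.le⟩
    simpa [hred ρ hρ, hρ.1.ne'] using h ρ hρ
  · intro h ρ hρ
    rw [hred ρ hρ, h _ (hsq ρ hρ), mul_zero]
end

section
/- There is no twice continuously differentiable function u : (0,1) → ℂ satisfying both the inhomogeneous ordinary differential equation −(1−ρ²)u''(ρ) − (2/ρ)u'(ρ) + 4ρ u'(ρ) − 4u(ρ) + (2/ρ²)u(ρ) = ρ for all ρ ∈ (0,1) and the weighted integrability condition ∫_0^1 ( |u'(ρ)|² + |u(ρ)|² ) ρ² dρ < ∞. -/
/-!
Since `ρ` solves the homogeneous equation, the weighted Wronskian `W = ρ² (1 - ρ²) (ρ u' - u)` of a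
solution satisfies `W' = -ρ⁴`, so `W + ρ⁵ / 5` is a constant `C`. With `f` the energy density
`(|u'|² + |u|²) ρ²`, one has `|W|² ≤ 2 ρ (1 - ρ) f`; and integrability of `f` rules out
`f ≥ ε / ρ` near `0` and `f ≥ ε / (1 - ρ)` near `1`. So `W` is arbitrarily small arbitrarily close
to both endpoints, which forces `C = 0` and `C = 1 / 5`.
-/

open Set MeasureTheory Filter Topology

theorem exists_abs_sub_mul_lt_of_integrableOn {f : ℝ → ℝ} {a b c ε : ℝ} (hab : a < b)
    (hc : c ∈ Icc a b) (hf : IntegrableOn f (Ioo a b)) (hε : 0 < ε) :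
    ∃ x ∈ Ioo a b, |x - c| * f x < ε := by
  by_contra! hge
  have hinv : IntegrableOn (fun x => (x - c)⁻¹) (Ioo a b) := by
    refine (hf.const_mul ε⁻¹).mono' (measurable_id.sub_const c).inv.aestronglyMeasurable ?_
    refine (ae_restrict_iff' measurableSet_Ioo).2 (Eventually.of_forall fun x hx => ?_)
    have hxc : x - c ≠ 0 := fun h => by simpa [h] using hε.trans_le (hge x hx)
    rw [norm_inv, Real.norm_eq_abs, inv_le_iff_one_le_mul₀' (abs_pos.2 hxc), mul_left_comm,
      ← div_eq_inv_mul, one_le_div hε]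
    exact hge x hx
  rw [← intervalIntegrable_iff_integrableOn_Ioo_of_le hab.le, intervalIntegrable_sub_inv_iff,
    uIcc_of_le hab.le] at hinv
  exact hinv.elim hab.ne (· hc)

theorem frequently_sub_mul_lt_nhdsGT {f : ℝ → ℝ} {a b ε : ℝ} (hab : a < b)
    (hf : IntegrableOn f (Ioo a b)) (hε : 0 < ε) : ∃ᶠ x in 𝓝[>] a, (x - a) * f x < ε := by
  refine (nhdsGT_basis a).frequently_iff.2 fun d hd => ?_
  obtain ⟨x, hx, hlt⟩ := exists_abs_sub_mul_lt_of_integrableOn (lt_min hd hab)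
    (left_mem_Icc.2 (lt_min hd hab).le) (hf.mono_set (Ioo_subset_Ioo_right (min_le_right d b))) hε
  exact ⟨x, Ioo_subset_Ioo_right (min_le_left d b) hx, by rwa [abs_of_pos (sub_pos.2 hx.1)] at hlt⟩

theorem frequently_sub_mul_lt_nhdsLT {f : ℝ → ℝ} {a b ε : ℝ} (hab : a < b)
    (hf : IntegrableOn f (Ioo a b)) (hε : 0 < ε) : ∃ᶠ x in 𝓝[<] b, (b - x) * f x < ε := by
  refine (nhdsLT_basis b).frequently_iff.2 fun d hd => ?_
  obtain ⟨x, hx, hlt⟩ := exists_abs_sub_mul_lt_of_integrableOn (max_lt hab hd)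
    (right_mem_Icc.2 (max_lt hab hd).le) (hf.mono_set (Ioo_subset_Ioo_left (le_max_left a d))) hε
  exact ⟨x, Ioo_subset_Ioo_left (le_max_right a d) hx, by
    rwa [abs_sub_comm, abs_of_pos (sub_pos.2 hx.2)] at hlt⟩

theorem eq_zero_of_tendsto_of_frequently_norm_lt {α E : Type*} [NormedAddCommGroup E]
    {l : Filter α} {g : α → E} {C : E} (hg : Tendsto g l (𝓝 C))
    (hsmall : ∀ ε > 0, ∃ᶠ x in l, ‖g x‖ < ε) : C = 0 := by
  by_contra hC
  have hpos : 0 < ‖C‖ := norm_pos_iff.2 hC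
  obtain ⟨x, hsm, hbig⟩ := ((hsmall _ (half_pos hpos)).and_eventually
    (hg.norm.eventually (lt_mem_nhds (half_lt_self hpos)))).exists
  exact hsm.not_gt hbig

/-- The radial part, in the spherical-harmonic sector `ℓ = 1`, of the linearized generator. -/
noncomputable def radialOperator (u : ℝ → ℂ) (ρ : ℝ) : ℂ :=
  -(1 - (ρ:ℂ)^2) * deriv (deriv u) ρ - (2 / (ρ:ℂ)) * deriv u ρ
    + 4 * (ρ:ℂ) * deriv u ρ - 4 * u ρ + (2 / (ρ:ℂ)^2) * u ρ

/-- `radialOperator u = -ρ⁻² (ρ² (1 - ρ²) u')' + (2 / ρ² - 4) u` annihilates `ρ`; this is the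
Wronskian of `u` with `ρ`, weighted by the Sturm–Liouville coefficient. -/
noncomputable def weightedWronskian (u : ℝ → ℂ) (ρ : ℝ) : ℂ :=
  (ρ ^ 2 * (1 - ρ ^ 2)) • (ρ • deriv u ρ - u ρ)

theorem hasDerivAt_weightedWronskian {u : ℝ → ℂ} {ρ : ℝ} (hρ : ρ ≠ 0)
    (hu : DifferentiableAt ℝ u ρ) (hu' : DifferentiableAt ℝ (deriv u) ρ) :
    HasDerivAt (weightedWronskian u) (-(ρ:ℂ) ^ 3 * radialOperator u ρ) ρ := by
  have H := ((hasDerivAt_pow 2 ρ).mul ((hasDerivAt_const ρ 1).sub (hasDerivAt_pow 2 ρ))).smul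
    (((hasDerivAt_id ρ).smul hu'.hasDerivAt).sub hu.hasDerivAt)
  refine H.congr_deriv ?_
  have hρC : (ρ:ℂ) ≠ 0 := Complex.ofReal_ne_zero.2 hρ
  simp only [radialOperator, Pi.mul_apply, Pi.smul_apply', Pi.sub_apply, id_eq, Complex.real_smul,
    one_smul]
  push_cast
  field_simp
  ring

theorem norm_weightedWronskian_sq_le {u : ℝ → ℂ} {ρ : ℝ} (hρ : ρ ∈ Icc (0:ℝ) 1) :
    ‖weightedWronskian u ρ‖ ^ 2 ≤ 2 * ρ * (1 - ρ) * ((‖deriv u ρ‖ ^ 2 + ‖u ρ‖ ^ 2) * ρ ^ 2) := by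
  obtain ⟨h0, h1⟩ := hρ
  have hweight : 0 ≤ ρ ^ 2 * (1 - ρ ^ 2) := mul_nonneg (sq_nonneg ρ) (by nlinarith)
  have hwronski : ‖ρ • deriv u ρ - u ρ‖ ≤ ‖deriv u ρ‖ + ‖u ρ‖ :=
    calc ‖ρ • deriv u ρ - u ρ‖ ≤ ρ * ‖deriv u ρ‖ + ‖u ρ‖ := by
          simpa only [norm_smul, Real.norm_of_nonneg h0] using norm_sub_le (ρ • deriv u ρ) (u ρ)
      _ ≤ ‖deriv u ρ‖ + ‖u ρ‖ := by gcongr; exact mul_le_of_le_one_left (norm_nonneg _) h1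
  have hcoeff : (ρ ^ 2 * (1 - ρ ^ 2)) ^ 2 ≤ ρ * (1 - ρ) * ρ ^ 2 := by
    have hq : ρ * (1 - ρ) * (1 + ρ) ^ 2 ≤ 1 := by
      nlinarith [sq_nonneg (ρ - 1/2), mul_nonneg h0 (sub_nonneg.2 h1)]
    have hp : 0 ≤ ρ ^ 3 * (1 - ρ) := mul_nonneg (pow_nonneg h0 3) (sub_nonneg.2 h1)
    calc (ρ ^ 2 * (1 - ρ ^ 2)) ^ 2 = ρ ^ 3 * (1 - ρ) * (ρ * (1 - ρ) * (1 + ρ) ^ 2) := by ring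
      _ ≤ ρ ^ 3 * (1 - ρ) * 1 := by gcongr
      _ = ρ * (1 - ρ) * ρ ^ 2 := by ring
  calc ‖weightedWronskian u ρ‖ ^ 2
      ≤ (ρ ^ 2 * (1 - ρ ^ 2)) ^ 2 * (‖deriv u ρ‖ + ‖u ρ‖) ^ 2 := by
        rw [weightedWronskian, norm_smul, Real.norm_of_nonneg hweight, ← mul_pow]
        gcongr
    _ ≤ ρ * (1 - ρ) * ρ ^ 2 * (2 * (‖deriv u ρ‖ ^ 2 + ‖u ρ‖ ^ 2)) := by
        gcongr
        exact add_sq_le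
    _ = _ := by ring

theorem exists_weightedWronskian_add_eq_const {u : ℝ → ℂ} (hu : ContDiffOn ℝ 2 u (Ioo 0 1))
    (hode : ∀ ρ ∈ Ioo (0:ℝ) 1, radialOperator u ρ = ρ) :
    ∃ C : ℂ, ∀ ρ ∈ Ioo (0:ℝ) 1, weightedWronskian u ρ + (ρ:ℂ) ^ 5 / 5 = C := by
  have hu' : ContDiffOn ℝ 1 (deriv u) (Ioo 0 1) := hu.deriv_of_isOpen isOpen_Ioo (by norm_num)
  have hderiv : ∀ ρ ∈ Ioo (0:ℝ) 1,
      HasDerivAt (fun x : ℝ => weightedWronskian u x + (x:ℂ) ^ 5 / 5) 0 ρ := by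
    intro ρ hρ
    have hnhds : Ioo (0:ℝ) 1 ∈ 𝓝 ρ := isOpen_Ioo.mem_nhds hρ
    have H := (hasDerivAt_weightedWronskian hρ.1.ne'
      ((hu.differentiableOn (by norm_num)).differentiableAt hnhds)
      ((hu'.differentiableOn one_ne_zero).differentiableAt hnhds)).add
      (((hasDerivAt_pow 5 (ρ:ℂ)).comp_ofReal).div_const 5)
    rw [hode ρ hρ] at H
    exact H.congr_deriv (by push_cast; ring)
  exact isOpen_Ioo.exists_is_const_of_deriv_eq_zero isPreconnected_Ioo
    (fun x hx => (hderiv x hx).differentiableAt.differentiableWithinAt)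
    (fun x hx => (hderiv x hx).deriv)

theorem tendsto_weightedWronskian {u : ℝ → ℂ} {C : ℂ}
    (hC : ∀ ρ ∈ Ioo (0:ℝ) 1, weightedWronskian u ρ + (ρ:ℂ) ^ 5 / 5 = C)
    {l : Filter ℝ} {ρ₀ : ℝ} (hl : l ≤ 𝓝 ρ₀) (hmem : Ioo (0:ℝ) 1 ∈ l) :
    Tendsto (weightedWronskian u) l (𝓝 (C - (ρ₀:ℂ) ^ 5 / 5)) := by
  have hlim : Tendsto (fun ρ : ℝ => C - (ρ:ℂ) ^ 5 / 5) l (𝓝 (C - (ρ₀:ℂ) ^ 5 / 5)) :=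
    ((by fun_prop : Continuous fun ρ : ℝ => C - (ρ:ℂ) ^ 5 / 5).tendsto ρ₀).mono_left hl
  refine hlim.congr' (eventually_of_mem hmem fun ρ hρ => ?_)
  rw [← hC ρ hρ, add_sub_cancel_right]

theorem frequently_norm_weightedWronskian_lt_nhdsGT {u : ℝ → ℂ}
    (hint : IntegrableOn (fun ρ : ℝ => (‖deriv u ρ‖ ^ 2 + ‖u ρ‖ ^ 2) * ρ ^ 2) (Ioo 0 1))
    {ε : ℝ} (hε : 0 < ε) :
    ∃ᶠ ρ in 𝓝[>] 0, ‖weightedWronskian u ρ‖ < ε := by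
  refine ((frequently_sub_mul_lt_nhdsGT one_pos hint (by positivity : 0 < ε ^ 2 / 2)).and_eventually
    (Ioo_mem_nhdsGT one_pos)).mono fun ρ ⟨hlt, hρ⟩ => ?_
  refine lt_of_pow_lt_pow_left₀ 2 hε.le
    ((norm_weightedWronskian_sq_le (Ioo_subset_Icc_self hρ)).trans_lt ?_)
  have hf : 0 ≤ (‖deriv u ρ‖ ^ 2 + ‖u ρ‖ ^ 2) * ρ ^ 2 := by positivity
  nlinarith [mul_nonneg (mul_nonneg hρ.1.le hρ.1.le) hf]

theorem frequently_norm_weightedWronskian_lt_nhdsLT {u : ℝ → ℂ}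
    (hint : IntegrableOn (fun ρ : ℝ => (‖deriv u ρ‖ ^ 2 + ‖u ρ‖ ^ 2) * ρ ^ 2) (Ioo 0 1))
    {ε : ℝ} (hε : 0 < ε) :
    ∃ᶠ ρ in 𝓝[<] 1, ‖weightedWronskian u ρ‖ < ε := by
  refine ((frequently_sub_mul_lt_nhdsLT one_pos hint (by positivity : 0 < ε ^ 2 / 2)).and_eventually
    (Ioo_mem_nhdsLT one_pos)).mono fun ρ ⟨hlt, hρ⟩ => ?_
  refine lt_of_pow_lt_pow_left₀ 2 hε.le
    ((norm_weightedWronskian_sq_le (Ioo_subset_Icc_self hρ)).trans_lt ?_)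
  have hf : 0 ≤ (‖deriv u ρ‖ ^ 2 + ‖u ρ‖ ^ 2) * ρ ^ 2 := by positivity
  have h1ρ : 0 ≤ 1 - ρ := sub_nonneg.2 hρ.2.le
  nlinarith [mul_nonneg (mul_nonneg h1ρ h1ρ) hf]

/-- There is no twice continuously differentiable `u : (0,1) → ℂ` solving
`-(1-ρ²)u'' - (2/ρ)u' + 4ρu' - 4u + (2/ρ²)u = ρ` on `(0,1)` with
`∫_0^1 (|u'|² + |u|²)ρ² dρ < ∞`. -/
theorem stmt19 :
    ¬ ∃ u : ℝ → ℂ, ContDiffOn ℝ 2 u (Ioo 0 1) ∧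
      (∀ ρ ∈ Ioo (0:ℝ) 1,
        -(1 - (ρ:ℂ)^2) * deriv (deriv u) ρ - (2 / (ρ:ℂ)) * deriv u ρ
          + 4 * (ρ:ℂ) * deriv u ρ - 4 * u ρ + (2 / (ρ:ℂ)^2) * u ρ = (ρ:ℂ)) ∧
      IntegrableOn (fun ρ : ℝ => (‖deriv u ρ‖^2 + ‖u ρ‖^2) * ρ^2) (Ioo 0 1) := by
  rintro ⟨u, hu, hode, hint⟩
  obtain ⟨C, hC⟩ := exists_weightedWronskian_add_eq_const hu hode
  have hC0 : C - ((0:ℝ):ℂ) ^ 5 / 5 = 0 :=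
    eq_zero_of_tendsto_of_frequently_norm_lt
      (tendsto_weightedWronskian hC nhdsWithin_le_nhds (Ioo_mem_nhdsGT one_pos))
      fun _ => frequently_norm_weightedWronskian_lt_nhdsGT hint
  have hC1 : C - ((1:ℝ):ℂ) ^ 5 / 5 = 0 :=
    eq_zero_of_tendsto_of_frequently_norm_lt
      (tendsto_weightedWronskian hC nhdsWithin_le_nhds (Ioo_mem_nhdsLT one_pos))
      fun _ => frequently_norm_weightedWronskian_lt_nhdsLT hint
  norm_num at hC0
  norm_num [hC0] at hC1
end
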